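/- arXiv:2101.01246 — 4 statements merged into one kernel-verified Lean document; each statement's English description precedes it below -/
import Mathlib

section
/- Suppose r₁, r₂ > 0 with r₁r₂ ≥ 1, and suppose Z₁(t) = u + X₁(t) + l₁(t) - r₂l₂(t) ≥ 0 and Z₂(t) = v + X₂(t) - r₁l₁(t) + l₂(t) ≥ 0 for all t ≥ 0, where l₁, l₂ ≥ 0. If there exists t ∈ ℝ₊ with u + X₁(t) < 0 and v + X₂(t) < 0, then a contradiction arises; i.e., it cannot hold that both Z₁(t) ≥ 0, Z₂(t) ≥ 0 for all t and u + X₁(t) < 0, v + X₂(t) < 0 for some t. Equivalently, solving the linear system gives (r₁r₂-1)l₁(t) = (u+X₁(t)-Z₁(t)) + r₂(v+X₂(t)-Z₂(t)) and (r₁r₂-1)l₂(t) = r₁(u+X₁(t)-Z₁(t)) + (v+X₂(t)-Z₂(t)), which are negative, contradicting l₁(t), l₂(t) ≥ 0. -/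
/-- If `r₁ r₂ ≥ 1`, `l₁, l₂ ≥ 0`, and the reflected paths
`Z₁ t = u + X₁ t + l₁ t - r₂ l₂ t` and `Z₂ t = v + X₂ t - r₁ l₁ t + l₂ t`
stay nonnegative, then it cannot happen that `u + X₁ t < 0` and `v + X₂ t < 0`
simultaneously for some `t ≥ 0`. -/
theorem no_simultaneous_negativity (u v : ℝ) (hu : 0 ≤ u) (hv : 0 ≤ v)
    (X₁ X₂ l₁ l₂ : ℝ → ℝ)
    (hX₁ : Continuous X₁) (hX₂ : Continuous X₂)
    (hl₁ : ∀ t, 0 ≤ t → 0 ≤ l₁ t) (hl₂ : ∀ t, 0 ≤ t → 0 ≤ l₂ t)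
    (r₁ r₂ : ℝ) (hr₁ : 0 < r₁) (hr₂ : 0 < r₂) (hr : 1 ≤ r₁ * r₂)
    (hZ₁ : ∀ t, 0 ≤ t → 0 ≤ u + X₁ t + l₁ t - r₂ * l₂ t)
    (hZ₂ : ∀ t, 0 ≤ t → 0 ≤ v + X₂ t - r₁ * l₁ t + l₂ t) :
    ¬ ∃ t : ℝ, 0 ≤ t ∧ u + X₁ t < 0 ∧ v + X₂ t < 0 := by
  rintro ⟨t, ht, h1, h2⟩
  have a := hZ₁ t ht
  have b := hZ₂ t ht
  have c := hl₁ t ht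
  have d := hl₂ t ht
  nlinarith [mul_nonneg hr₂.le d, mul_nonneg hr₁.le c, mul_pos hr₁ hr₂]
end

section
/- Suppose r₁r₂ = 1 with r₁, r₂ > 0, μ₁, μ₂ > 0, |ρ| < 1. Let y₂ = -2(r₁μ₁ + μ₂)/(1 + r₁² + 2ρr₁) and x₁ = -2(r₂μ₂ + μ₁)/(1 + r₂² + 2ρr₂). Then x₁ = r₁y₂, and K(x₁, y₂) = 0 where K(x,y) = (1/2)(x² + y² + 2ρxy) + μ₁x + μ₂y. Consequently, the function f(u,v) = exp(ux₁ + vy₂) satisfies the elliptic PDE (1/2)(f_uu + f_vv + 2ρf_uv) + μ₁f_u + μ₂f_v = 0 on the quadrant. -/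
/-!
On exponentials `exp (u x + v y)` the generator acts as multiplication by `K(x, y)`, so `f` solves
the PDE as soon as `(x₁, y₂)` lies on the conic `K = 0`. On the line `x = r y` the conic reduces to
`y (y (1 + r² + 2ρr) / 2 + r μ₁ + μ₂) = 0`, whose nonzero root is the formula for `y₂` (with
`r = r₁`). When `r₁ r₂ = 1` the lines `x = r₁ y` and `y = r₂ x` coincide, and the same computation
with the roles of the coordinates swapped yields `x₁ = r₁ y₂`.
-/

namespace DualSkewSymmetry

variable (ρ μ₁ μ₂ : ℝ)

noncomputable def kernel (x y : ℝ) : ℝ := (1 / 2) * (x ^ 2 + y ^ 2 + 2 * ρ * x * y) + μ₁ * x + μ₂ * y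

noncomputable def generator (f : ℝ → ℝ → ℝ) (u v : ℝ) : ℝ :=
  (1 / 2) * (deriv (fun u' => deriv (fun u'' => f u'' v) u') u
      + deriv (fun v' => deriv (fun v'' => f u v'') v') v
      + 2 * ρ * deriv (fun u' => deriv (fun v' => f u' v') v) u)
    + μ₁ * deriv (fun u' => f u' v) u + μ₂ * deriv (fun v' => f u v') v

theorem generator_exp (x y u v : ℝ) :
    generator ρ μ₁ μ₂ (fun u v => Real.exp (u * x + v * y)) u v
      = kernel ρ μ₁ μ₂ x y * Real.exp (u * x + v * y) := by
  simp [generator, kernel]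
  ring

/-- The second point where the line `x = r y` meets the conic `kernel ρ μ₁ μ₂ x y = 0`. -/
noncomputable def rayRoot (r : ℝ) : ℝ := -2 * (r * μ₁ + μ₂) / (1 + r ^ 2 + 2 * ρ * r)

theorem kernel_rayRoot (r : ℝ) :
    kernel ρ μ₁ μ₂ (r * rayRoot ρ μ₁ μ₂ r) (rayRoot ρ μ₁ μ₂ r) = 0 := by
  rcases eq_or_ne (1 + r ^ 2 + 2 * ρ * r) 0 with hD | hD
  · simp [rayRoot, hD, kernel]
  · unfold kernel rayRoot
    field_simp
    ring

theorem rayRoot_swap {r₁ r₂ : ℝ} (h : r₁ * r₂ = 1) :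
    rayRoot ρ μ₂ μ₁ r₂ = r₁ * rayRoot ρ μ₁ μ₂ r₁ := by
  set N := r₁ * μ₁ + μ₂
  set D := 1 + r₁ ^ 2 + 2 * ρ * r₁
  have hnum : r₂ * μ₂ + μ₁ = r₂ * N := by linear_combination (-μ₁) * h
  have hden : 1 + r₂ ^ 2 + 2 * ρ * r₂ = r₂ * (r₂ * D) := by
    linear_combination (-(r₂ * r₁) - 1 - 2 * ρ * r₂) * h
  calc rayRoot ρ μ₂ μ₁ r₂ = r₂ * (-2 * N) / (r₂ * (r₂ * D)) := by
        rw [rayRoot, hnum, hden, mul_left_comm]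
    _ = -2 * N / D * r₂⁻¹ := by
        rw [mul_div_mul_left _ _ (right_ne_zero_of_mul_eq_one h), mul_comm r₂, ← div_div,
          div_eq_mul_inv]
    _ = r₁ * rayRoot ρ μ₁ μ₂ r₁ := by rw [← eq_inv_of_mul_eq_one_left h, mul_comm]; rfl

end DualSkewSymmetry

open DualSkewSymmetry in
theorem dual_skew_symmetry_pde_general (μ₁ μ₂ ρ r₁ r₂ : ℝ) (hsym : r₁ * r₂ = 1) :
    let x₁ : ℝ := -2 * (r₂ * μ₂ + μ₁) / (1 + r₂ ^ 2 + 2 * ρ * r₂)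
    let y₂ : ℝ := -2 * (r₁ * μ₁ + μ₂) / (1 + r₁ ^ 2 + 2 * ρ * r₁)
    let f : ℝ → ℝ → ℝ := fun u v => Real.exp (u * x₁ + v * y₂)
    x₁ = r₁ * y₂ ∧
    (1 / 2) * (x₁ ^ 2 + y₂ ^ 2 + 2 * ρ * x₁ * y₂) + μ₁ * x₁ + μ₂ * y₂ = 0 ∧
    ∀ u v : ℝ, 0 ≤ u → 0 ≤ v →
      (1 / 2) * (deriv (fun u' => deriv (fun u'' => f u'' v) u') u
          + deriv (fun v' => deriv (fun v'' => f u v'') v') v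
          + 2 * ρ * deriv (fun u' => deriv (fun v' => f u' v') v) u)
        + μ₁ * deriv (fun u' => f u' v) u + μ₂ * deriv (fun v' => f u v') v = 0 := by
  intro x₁ y₂ f
  have hx : x₁ = r₁ * y₂ := rayRoot_swap ρ μ₁ μ₂ hsym
  have hK : kernel ρ μ₁ μ₂ x₁ y₂ = 0 := hx ▸ kernel_rayRoot ρ μ₁ μ₂ r₁
  refine ⟨hx, hK, fun u v _ _ => ?_⟩
  change generator ρ μ₁ μ₂ f u v = 0
  rw [generator_exp, hK, zero_mul]

/-- Dual skew symmetry: if `r₁ r₂ = 1`, then `x₁ = r₁ y₂`, `K(x₁, y₂) = 0`, and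
`f(u,v) = exp(u x₁ + v y₂)` satisfies the elliptic PDE
`(1/2)(f_uu + f_vv + 2ρ f_uv) + μ₁ f_u + μ₂ f_v = 0` on the quadrant. -/
theorem dual_skew_symmetry_pde (μ₁ μ₂ ρ r₁ r₂ : ℝ) (hμ₁ : 0 < μ₁) (hμ₂ : 0 < μ₂)
    (hρ : |ρ| < 1) (hr₁ : 0 < r₁) (hr₂ : 0 < r₂) (hsym : r₁ * r₂ = 1) :
    let x₁ : ℝ := -2 * (r₂ * μ₂ + μ₁) / (1 + r₂ ^ 2 + 2 * ρ * r₂)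
    let y₂ : ℝ := -2 * (r₁ * μ₁ + μ₂) / (1 + r₁ ^ 2 + 2 * ρ * r₁)
    let f : ℝ → ℝ → ℝ := fun u v => Real.exp (u * x₁ + v * y₂)
    x₁ = r₁ * y₂ ∧
    (1 / 2) * (x₁ ^ 2 + y₂ ^ 2 + 2 * ρ * x₁ * y₂) + μ₁ * x₁ + μ₂ * y₂ = 0 ∧
    ∀ u v : ℝ, 0 ≤ u → 0 ≤ v →
      (1 / 2) * (deriv (fun u' => deriv (fun u'' => f u'' v) u') u
          + deriv (fun v' => deriv (fun v'' => f u v'') v') v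
          + 2 * ρ * deriv (fun u' => deriv (fun v' => f u' v') v) u)
        + μ₁ * deriv (fun u' => f u' v) u + μ₂ * deriv (fun v' => f u v') v = 0 :=
  dual_skew_symmetry_pde_general μ₁ μ₂ ρ r₁ r₂ hsym
end

section
/- Let δ, ε, β ∈ (0, π) be such that tan δ = sin β/(-r₂ + cos β) and tan ε = sin β/(-r₁ + cos β) (with the convention that the angle equals π/2 when the denominator vanishes), where r₁, r₂ > 0. Then r₁r₂ = 1 if and only if ε = β - δ + π. -/
private lemma tan_aux (β θ r : ℝ) (hβ : β ∈ Set.Ioo 0 Real.pi)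
    (hθ : θ ∈ Set.Ioo 0 Real.pi) (hr : 0 < r)
    (h : Real.tan θ = Real.sin β / (Real.cos β - r)) :
    Real.sin (θ - β) = r * Real.sin θ := by
  have hsβ : 0 < Real.sin β := Real.sin_pos_of_pos_of_lt_pi hβ.1 hβ.2
  have hsθ : 0 < Real.sin θ := Real.sin_pos_of_pos_of_lt_pi hθ.1 hθ.2
  rw [Real.sin_sub]
  rw [Real.tan_eq_sin_div_cos] at h
  by_cases hc : Real.cos θ = 0
  · rw [hc, div_zero] at h
    have h0 := (div_eq_zero_iff.mp h.symm).resolve_left hsβ.ne'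
    have hcb : Real.cos β = r := by linarith [sub_eq_zero.mp h0]
    rw [hc, hcb]; ring
  · by_cases hd : Real.cos β - r = 0
    · rw [hd, div_zero] at h
      exact absurd h (div_ne_zero hsθ.ne' hc)
    · have key := (div_eq_div_iff hc hd).mp h
      linear_combination key

private lemma gt_aux (β θ r : ℝ) (hβ : β ∈ Set.Ioo 0 Real.pi)
    (hθ : θ ∈ Set.Ioo 0 Real.pi) (hr : 0 < r)
    (h : Real.sin (θ - β) = r * Real.sin θ) : β < θ := by
  have hsθ : 0 < Real.sin θ := Real.sin_pos_of_pos_of_lt_pi hθ.1 hθ.2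
  by_contra hle
  push_neg at hle
  have h1 : 0 ≤ Real.sin (β - θ) :=
    Real.sin_nonneg_of_nonneg_of_le_pi (by linarith) (by linarith [hβ.2, hθ.1])
  rw [show θ - β = -(β - θ) by ring, Real.sin_neg] at h
  nlinarith [mul_pos hr hsθ]

/-- Geometric form of the dual skew symmetry condition: with
`tan δ = sin β / (cos β - r₂)` and `tan ε = sin β / (cos β - r₁)` (angles in
`(0,π)`, with the convention that the angle is `π/2` when the denominator
vanishes, which matches Lean's junk-value convention for division and `tan`),
one has `r₁ r₂ = 1` if and only if `ε = β - δ + π`. -/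
theorem dual_skew_symmetry_angles (r₁ r₂ β δ ε : ℝ)
    (hr₁ : 0 < r₁) (hr₂ : 0 < r₂)
    (hβ : β ∈ Set.Ioo 0 Real.pi) (hδ : δ ∈ Set.Ioo 0 Real.pi)
    (hε : ε ∈ Set.Ioo 0 Real.pi)
    (htanδ : Real.tan δ = Real.sin β / (Real.cos β - r₂))
    (htanε : Real.tan ε = Real.sin β / (Real.cos β - r₁)) :
    r₁ * r₂ = 1 ↔ ε = β - δ + Real.pi := by
  have hπ := Real.pi_pos
  have hsβ : 0 < Real.sin β := Real.sin_pos_of_pos_of_lt_pi hβ.1 hβ.2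
  have hsδ : 0 < Real.sin δ := Real.sin_pos_of_pos_of_lt_pi hδ.1 hδ.2
  have hsε : 0 < Real.sin ε := Real.sin_pos_of_pos_of_lt_pi hε.1 hε.2
  have h2 : Real.sin (δ - β) = r₂ * Real.sin δ := tan_aux β δ r₂ hβ hδ hr₂ htanδ
  have h1 : Real.sin (ε - β) = r₁ * Real.sin ε := tan_aux β ε r₁ hβ hε hr₁ htanε
  have hδβ : β < δ := gt_aux β δ r₂ hβ hδ hr₂ h2
  have hεβ : β < ε := gt_aux β ε r₁ hβ hε hr₁ h1
  have key : Real.sin (δ - β) * Real.sin (ε - β)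
      = Real.sin δ * Real.sin ε - Real.sin (δ + ε - β) * Real.sin β := by
    rw [show δ + ε - β = (δ - β) + ε by ring, Real.sin_add, Real.sin_sub,
      Real.cos_sub, Real.sin_sub]
    linear_combination Real.sin δ * Real.sin ε * Real.sin_sq_add_cos_sq β
  have hrr : r₁ * r₂ * (Real.sin δ * Real.sin ε)
      = Real.sin δ * Real.sin ε - Real.sin (δ + ε - β) * Real.sin β := by
    rw [← key, h1, h2]; ring
  constructor
  · intro h
    rw [h, one_mul] at hrr
    have hs0 : Real.sin (δ + ε - β) = 0 := by
      have : Real.sin (δ + ε - β) * Real.sin β = 0 := by linarith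
      rcases mul_eq_zero.mp this with h' | h'
      · exact h'
      · exact absurd h' hsβ.ne'
    obtain ⟨n, hn⟩ := Real.sin_eq_zero_iff.mp hs0
    have hlo : 0 < δ + ε - β := by linarith [hε.1]
    have hhi : δ + ε - β < 2 * Real.pi := by linarith [hδ.2, hε.2, hβ.1]
    have hn1 : 0 < n := by
      by_contra hc
      push_neg at hc
      have : (n : ℝ) ≤ 0 := by exact_mod_cast hc
      nlinarith
    have hn2 : n < 2 := by
      by_contra hc
      push_neg at hc
      have : (2 : ℝ) ≤ (n : ℝ) := by exact_mod_cast hc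
      nlinarith
    have : n = 1 := by omega
    rw [this] at hn
    push_cast at hn
    linarith
  · intro h
    have : δ + ε - β = Real.pi := by linarith
    rw [this, Real.sin_pi] at hrr
    have hS : 0 < Real.sin δ * Real.sin ε := mul_pos hsδ hsε
    have : r₁ * r₂ * (Real.sin δ * Real.sin ε) = 1 * (Real.sin δ * Real.sin ε) := by
      linarith
    exact mul_right_cancel₀ hS.ne' this
end

section
/- Let μ₁, μ₂ > 0 and β, θ ∈ (0, π) with θ < β, where cos β = -ρ (|ρ| < 1) and tan θ = sin β/(μ₁/μ₂ + cos β). Then the larger branch point y⁺ = (μ₁ρ - μ₂ + √((μ₁ρ-μ₂)² + μ₁²(1-ρ²)))/(1-ρ²) satisfies y⁺ = μ₁(1 - cos(β - θ))/(sin β · sin(β - θ)). -/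
/-!
Put `φ = β - θ`. Clearing denominators in `tan θ = sin β / (μ₁/μ₂ + cos β)` gives the law of
sines `μ₁ sin θ = μ₂ sin φ`, and expanding `sin θ = sin (β - φ)` with `cos β = -ρ` turns it into
`(μ₁ρ - μ₂) sin φ = -μ₁ sin β cos φ`. Since `1 - ρ² = sin² β`, the discriminant is then
`(μ₁ sin β / sin φ)²`, and `y⁺` collapses to `μ₁ (1 - cos φ) / (sin β sin φ)`.
-/

open Real

lemma mul_sin_eq_sin_sub_of_tan_eq {a β θ : ℝ} (hβ : sin β ≠ 0) (hθ : sin θ ≠ 0)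
    (h : tan θ = sin β / (a + cos β)) : a * sin θ = sin (β - θ) := by
  rw [sin_sub, tan_eq_sin_div_cos] at *
  by_cases hcos : cos θ = 0
  · -- `tan θ` takes the junk value `0`, which forces `a + cos β = 0`
    rw [hcos, div_zero, eq_comm, div_eq_zero_iff] at h
    have ha : a = -cos β := by linarith [h.resolve_left hβ]
    rw [hcos, ha]
    ring
  · have hden : a + cos β ≠ 0 := by
      rintro hden
      rw [hden, div_zero, div_eq_zero_iff] at h
      exact h.elim hθ hcos
    rw [div_eq_div_iff hcos hden] at h
    linear_combination h

lemma add_sqrt_div_sq_eq_of_mul_sin_eq {m b s φ : ℝ} (hm : 0 ≤ m) (hs : 0 < s)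
    (hφ : 0 < sin φ) (h : b * sin φ = -(m * s * cos φ)) :
    (b + √(b ^ 2 + m ^ 2 * s ^ 2)) / s ^ 2 = m * (1 - cos φ) / (s * sin φ) := by
  have hdisc : b ^ 2 + m ^ 2 * s ^ 2 = (m * s / sin φ) ^ 2 := by
    rw [div_pow, eq_div_iff (by positivity)]
    linear_combination (b * sin φ - m * s * cos φ) * h + (m * s) ^ 2 * sin_sq_add_cos_sq φ
  rw [hdisc, sqrt_sq (by positivity)]
  field_simp
  linear_combination h

/-- With `β = arccos(-ρ)` and `θ ∈ (0, β)` such that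
`tan θ = sin β / (μ₁/μ₂ + cos β)`, the larger branch point
`y⁺ = (μ₁ρ - μ₂ + √((μ₁ρ - μ₂)² + μ₁²(1 - ρ²)))/(1 - ρ²)` satisfies
`y⁺ = μ₁ (1 - cos(β - θ)) / (sin β · sin(β - θ))`. -/
theorem branch_point_trig_formula (μ₁ μ₂ ρ β θ : ℝ)
    (hμ₁ : 0 < μ₁) (hμ₂ : 0 < μ₂) (hρ : |ρ| < 1)
    (hβ : β = Real.arccos (-ρ)) (hθ₀ : 0 < θ) (hθβ : θ < β)
    (htanθ : Real.tan θ = Real.sin β / (μ₁ / μ₂ + Real.cos β)) :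
    (μ₁ * ρ - μ₂ + Real.sqrt ((μ₁ * ρ - μ₂) ^ 2 + μ₁ ^ 2 * (1 - ρ ^ 2))) / (1 - ρ ^ 2)
      = μ₁ * (1 - Real.cos (β - θ)) / (Real.sin β * Real.sin (β - θ)) := by
  obtain ⟨hρ₁, hρ₂⟩ := abs_lt.mp hρ
  have hcos : cos β = -ρ := hβ ▸ cos_arccos (by linarith) (by linarith)
  have hsin_sq : sin β ^ 2 = 1 - ρ ^ 2 := by
    rw [hβ, sin_arccos, neg_sq, sq_sqrt (by nlinarith)]
  have hsin : 0 < sin β := by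
    rw [hβ, sin_arccos]
    exact sqrt_pos.mpr (by nlinarith)
  have hβπ : β ≤ π := hβ ▸ arccos_le_pi _
  have hsinθ : 0 < sin θ := sin_pos_of_pos_of_lt_pi hθ₀ (by linarith)
  have hsinφ : 0 < sin (β - θ) := sin_pos_of_pos_of_lt_pi (by linarith) (by linarith)
  have hsines : μ₁ / μ₂ * sin θ = sin (β - θ) :=
    mul_sin_eq_sin_sub_of_tan_eq hsin.ne' hsinθ.ne' htanθ
  have hexpand : sin θ = sin β * cos (β - θ) - cos β * sin (β - θ) := by
    rw [← sin_sub, sub_sub_cancel]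
  have hkey : (μ₁ * ρ - μ₂) * sin (β - θ) = -(μ₁ * sin β * cos (β - θ)) := by
    field_simp at hsines
    linear_combination hsines - μ₁ * hexpand + μ₁ * sin (β - θ) * hcos
  rw [← hsin_sq]
  exact add_sqrt_div_sq_eq_of_mul_sin_eq hμ₁.le hsin hsinφ hkey
end
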